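/- arXiv:2306.08312 — 2 statements merged into one kernel-verified Lean document; each statement's English description precedes it below -/
import Mathlib

section
/- Let t ≤ T, x ≥ 0 and let v : [t,T] → ℝ be continuous with v(t) = 0. Suppose (X₁, L₁) and (X₂, L₂) are both pairs of continuous functions on [t,T] such that for k = 1,2: X_k(s) = x + v(s) + L_k(s), X_k(s) ≥ 0 for all s, L_k is nondecreasing with L_k(t) = 0, and ∫_t^T X_k(s) dL_k(s) = 0. Then X₁ = X₂ and L₁ = L₂, and moreover L₁(s) = max(0, sup_{r∈[t,s]} (−v(r)) − x) for all s ∈ [t,T]. -/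
/-! Write `S s = sup_{[t,s]} (-v)`. Since `X ≥ 0` and `L` is nondecreasing, `L s ≥ max 0 (S s - x)`.
Conversely, on any stretch of `[t, s]` where `L > max 0 (S s - x)` we get `X > 0`, so `L` is flat
there; a continuous function that starts at or below a level and can only move while at or below
it never exceeds that level. -/

open Set

theorem ContinuousOn.le_of_flat_above {a b M : ℝ} {L : ℝ → ℝ} (hab : a ≤ b)
    (hL : ContinuousOn L (Icc a b)) (ha : L a ≤ M)
    (hflat : ∀ r ∈ Icc a b, (∀ q ∈ Icc r b, M < L q) → L b = L r) : L b ≤ M := by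
  by_contra! hb
  set A := Icc a b ∩ L ⁻¹' Iic M
  have hAbdd : BddAbove A := ⟨b, fun r hr => hr.1.2⟩
  have huA : sSup A ∈ A := (hL.preimage_isClosed_of_isClosed isClosed_Icc isClosed_Iic).csSup_mem
    ⟨a, left_mem_Icc.2 hab, ha⟩ hAbdd
  set u := sSup A
  obtain ⟨⟨hau, hub_le⟩, hLu : L u ≤ M⟩ := huA
  have hub : u < b := hub_le.lt_of_ne fun h => by rw [h] at hLu; linarith
  have hIoc : Ioc u b ⊆ Icc a b := fun r hr => ⟨hau.trans hr.1.le, hr.2⟩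
  have hgt : ∀ q ∈ Ioc u b, M < L q := fun q hq =>
    lt_of_not_ge fun hqM => hq.1.not_ge (le_csSup hAbdd ⟨hIoc hq, hqM⟩)
  have hconst : L '' Ioc u b ⊆ {L b} := by
    rintro _ ⟨r, hr, rfl⟩
    exact (hflat r (hIoc hr) fun q hq => hgt q ⟨hr.1.trans_le hq.1, hq.2⟩).symm
  have hu_closure : u ∈ closure (Ioc u b) := by
    rw [closure_Ioc hub.ne]
    exact left_mem_Icc.2 hub.le
  have hLu_closure : L u ∈ closure (L '' Ioc u b) :=
    ((hL u ⟨hau, hub.le⟩).mono hIoc).mem_closure_image hu_closure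
  have hLub : L u = L b := by simpa using closure_mono hconst hLu_closure
  linarith

theorem skorokhod_regulator_eq {t T x : ℝ} {v X L : ℝ → ℝ} (hLc : ContinuousOn L (Icc t T))
    (hX : ∀ s ∈ Icc t T, X s = x + v s + L s) (hX0 : ∀ s ∈ Icc t T, 0 ≤ X s)
    (hLm : MonotoneOn L (Icc t T)) (hLt : L t = 0)
    (hflat : ∀ s₁ ∈ Icc t T, ∀ s₂ ∈ Icc t T, s₁ ≤ s₂ →
      (∀ s ∈ Icc s₁ s₂, 0 < X s) → L s₂ = L s₁)
    {s : ℝ} (hs : s ∈ Icc t T) :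
    L s = max 0 (sSup ((fun r => -v r) '' Icc t s) - x) := by
  have hsub : Icc t s ⊆ Icc t T := Icc_subset_Icc_right hs.2
  set S := sSup ((fun r => -v r) '' Icc t s)
  have hbound : ∀ r ∈ Icc t s, -v r ≤ x + L s := fun r hr => by
    linarith [hLm (hsub hr) hs hr.2, hX0 r (hsub hr), hX r (hsub hr)]
  have hbdd : BddAbove ((fun r => -v r) '' Icc t s) := ⟨x + L s, forall_mem_image.2 hbound⟩
  have hL0 : 0 ≤ L s := hLt ▸ hLm (left_mem_Icc.2 (hs.1.trans hs.2)) hs hs.1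
  have hSle : S ≤ x + L s := csSup_le ((nonempty_Icc.2 hs.1).image _) (forall_mem_image.2 hbound)
  refine le_antisymm ?_ (max_le hL0 (by linarith))
  refine (hLc.mono hsub).le_of_flat_above hs.1 (by simp [hLt]) fun r hr hgt => ?_
  refine hflat r (hsub hr) s hs hr.2 fun q hq => ?_
  have hqs : q ∈ Icc t s := ⟨hr.1.trans hq.1, hq.2⟩
  have hvq : -v q ≤ S := le_csSup hbdd (mem_image_of_mem _ hqs)
  linarith [hX q (hsub hqs), hgt q hq, le_max_right 0 (S - x)]

theorem stmt3_general (t T x : ℝ)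
    (v : ℝ → ℝ)
    (X₁ L₁ X₂ L₂ : ℝ → ℝ)
    (hL₁c : ContinuousOn L₁ (Set.Icc t T))
    (hL₂c : ContinuousOn L₂ (Set.Icc t T))
    (hX₁ : ∀ s ∈ Set.Icc t T, X₁ s = x + v s + L₁ s)
    (hX₂ : ∀ s ∈ Set.Icc t T, X₂ s = x + v s + L₂ s)
    (hX₁0 : ∀ s ∈ Set.Icc t T, 0 ≤ X₁ s)
    (hX₂0 : ∀ s ∈ Set.Icc t T, 0 ≤ X₂ s)
    (hL₁m : MonotoneOn L₁ (Set.Icc t T)) (hL₂m : MonotoneOn L₂ (Set.Icc t T))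
    (hL₁t : L₁ t = 0) (hL₂t : L₂ t = 0)
    -- ∫_t^T X_k dL_k = 0 : L_k is constant on any subinterval where X_k > 0
    (hflat₁ : ∀ s₁ ∈ Set.Icc t T, ∀ s₂ ∈ Set.Icc t T, s₁ ≤ s₂ →
      (∀ s ∈ Set.Icc s₁ s₂, 0 < X₁ s) → L₁ s₂ = L₁ s₁)
    (hflat₂ : ∀ s₁ ∈ Set.Icc t T, ∀ s₂ ∈ Set.Icc t T, s₁ ≤ s₂ →
      (∀ s ∈ Set.Icc s₁ s₂, 0 < X₂ s) → L₂ s₂ = L₂ s₁) :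
    ∀ s ∈ Set.Icc t T,
      X₁ s = X₂ s ∧ L₁ s = L₂ s ∧
      L₁ s = max 0 (sSup ((fun r => -v r) '' Set.Icc t s) - x) := by
  intro s hs
  have h₁ := skorokhod_regulator_eq hL₁c hX₁ hX₁0 hL₁m hL₁t hflat₁ hs
  have h₂ := skorokhod_regulator_eq hL₂c hX₂ hX₂0 hL₂m hL₂t hflat₂ hs
  have hL : L₁ s = L₂ s := h₁.trans h₂.symm
  exact ⟨by rw [hX₁ s hs, hX₂ s hs, hL], hL, h₁⟩

theorem stmt3 (t T x : ℝ) (htT : t ≤ T) (hx : 0 ≤ x)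
    (v : ℝ → ℝ) (hv : ContinuousOn v (Set.Icc t T)) (hvt : v t = 0)
    (X₁ L₁ X₂ L₂ : ℝ → ℝ)
    (hX₁c : ContinuousOn X₁ (Set.Icc t T)) (hL₁c : ContinuousOn L₁ (Set.Icc t T))
    (hX₂c : ContinuousOn X₂ (Set.Icc t T)) (hL₂c : ContinuousOn L₂ (Set.Icc t T))
    (hX₁ : ∀ s ∈ Set.Icc t T, X₁ s = x + v s + L₁ s)
    (hX₂ : ∀ s ∈ Set.Icc t T, X₂ s = x + v s + L₂ s)
    (hX₁0 : ∀ s ∈ Set.Icc t T, 0 ≤ X₁ s)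
    (hX₂0 : ∀ s ∈ Set.Icc t T, 0 ≤ X₂ s)
    (hL₁m : MonotoneOn L₁ (Set.Icc t T)) (hL₂m : MonotoneOn L₂ (Set.Icc t T))
    (hL₁t : L₁ t = 0) (hL₂t : L₂ t = 0)
    -- ∫_t^T X_k dL_k = 0 : L_k is constant on any subinterval where X_k > 0
    (hflat₁ : ∀ s₁ ∈ Set.Icc t T, ∀ s₂ ∈ Set.Icc t T, s₁ ≤ s₂ →
      (∀ s ∈ Set.Icc s₁ s₂, 0 < X₁ s) → L₁ s₂ = L₁ s₁)
    (hflat₂ : ∀ s₁ ∈ Set.Icc t T, ∀ s₂ ∈ Set.Icc t T, s₁ ≤ s₂ →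
      (∀ s ∈ Set.Icc s₁ s₂, 0 < X₂ s) → L₂ s₂ = L₂ s₁) :
    ∀ s ∈ Set.Icc t T,
      X₁ s = X₂ s ∧ L₁ s = L₂ s ∧
      L₁ s = max 0 (sSup ((fun r => -v r) '' Set.Icc t s) - x) :=
  stmt3_general t T x v X₁ L₁ X₂ L₂ hL₁c hL₂c hX₁ hX₂ hX₁0 hX₂0 hL₁m hL₂m hL₁t hL₂t hflat₁ hflat₂
end

section
/- Let (Ω, F, P) be a probability space, t ≤ T, c ≠ 0. Let L : [t,T] × Ω → [0,∞) be a stochastic process with continuous nondecreasing paths and L_t = 0, and let Y : [t,T] × Ω → ℝ be a stochastic process with continuous paths such that the σ-algebras generated by (L_s)_{s∈[t,T]} and (Y_s)_{s∈[t,T]} are independent. Assume E[e^{3|c| L_T}] < ∞ and E[sup_{s∈[t,T]} |Y_s|³] < ∞. Then E[∫_t^T Y_s d(e^{c L_s})] = ∫_t^T E[Y_s] d(E[e^{c L_s}]), where the inner integrals are pathwise Riemann–Stieltjes integrals and the function s ↦ E[e^{c L_s}] is monotone so the right-hand Stieltjes integral is well defined. -/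
/-!
Pathwise, the Riemann–Stieltjes sums of a continuous integrand against a monotone or antitone
integrator form a Cauchy sequence: over the common refinement of two uniform partitions the sums
differ only in their tags, so uniform continuity bounds their difference by `ε` times the total
variation. Taking the expectation of one Riemann–Stieltjes sum, independence factors every term,
`E[Y_s (e^{c L_s'} - e^{c L_s''})] = E[Y_s] E[e^{c L_s'} - e^{c L_s''}]`, so the expected sums are
exactly the Riemann–Stieltjes sums of the mean functions. The pathwise sums are dominated by
`sup |Y| · e^{|c| L_T} ≤ sup |Y|³ + e^{3|c| L_T} + 1`, which is integrable, and dominated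
convergence passes to the limit.
-/

open Filter Finset MeasureTheory ProbabilityTheory

/-- Riemann–Stieltjes sum of `g` against the integrator `h` over the uniform partition
`s_k = t + (T−t)k/n` of `[t,T]`, with evaluation at the right endpoints. -/
noncomputable def RSsum (t T : ℝ) (n : ℕ) (g h : ℝ → ℝ) : ℝ :=
  ∑ k ∈ Finset.range n,
    g (t + (T - t) * (k + 1) / n) *
      (h (t + (T - t) * (k + 1) / n) - h (t + (T - t) * k / n))

theorem Finset.sum_range_mul_eq_sum_sum {M : Type*} [AddCommMonoid M] (f : ℕ → M) (n m : ℕ) :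
    ∑ j ∈ range (n * m), f j = ∑ k ∈ range n, ∑ i ∈ range m, f (k * m + i) := by
  induction n with
  | zero => simp
  | succ n ih => rw [Nat.succ_mul, sum_range_add, ih, sum_range_succ]

theorem abs_sum_mul_sub_le_of_monotoneOn {a b : ℕ → ℝ} {K : ℕ} {C : ℝ}
    (ha : MonotoneOn a (Set.Iic K)) (hb : ∀ j < K, |b j| ≤ C) :
    |∑ j ∈ range K, b j * (a (j + 1) - a j)| ≤ C * (a K - a 0) := by
  have hinc : ∀ j < K, 0 ≤ a (j + 1) - a j := fun j hj =>
    sub_nonneg.2 (ha (Set.mem_Iic.2 hj.le) (Set.mem_Iic.2 hj) j.le_succ)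
  calc |∑ j ∈ range K, b j * (a (j + 1) - a j)|
      ≤ ∑ j ∈ range K, |b j| * (a (j + 1) - a j) := by
        refine (abs_sum_le_sum_abs _ _).trans_eq (sum_congr rfl fun j hj => ?_)
        rw [abs_mul, abs_of_nonneg (hinc j (mem_range.1 hj))]
    _ ≤ ∑ j ∈ range K, C * (a (j + 1) - a j) :=
        sum_le_sum fun j hj => mul_le_mul_of_nonneg_right (hb j (mem_range.1 hj))
          (hinc j (mem_range.1 hj))
    _ = C * (a K - a 0) := by rw [← mul_sum, sum_range_sub]

theorem abs_sum_mul_sub_le {a b : ℕ → ℝ} {K : ℕ} {C : ℝ}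
    (ha : MonotoneOn a (Set.Iic K) ∨ AntitoneOn a (Set.Iic K)) (hb : ∀ j < K, |b j| ≤ C) :
    |∑ j ∈ range K, b j * (a (j + 1) - a j)| ≤ C * |a K - a 0| := by
  have hK : K ∈ Set.Iic K := Set.mem_Iic.2 le_rfl
  have h0 : 0 ∈ Set.Iic K := Set.mem_Iic.2 K.zero_le
  rcases ha with ha | ha
  · rw [abs_of_nonneg (sub_nonneg.2 (ha h0 hK K.zero_le))]
    exact abs_sum_mul_sub_le_of_monotoneOn ha hb
  · have hneg : ∑ j ∈ range K, b j * (a (j + 1) - a j)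
        = -∑ j ∈ range K, b j * ((-a) (j + 1) - (-a) j) := by
      rw [← sum_neg_distrib]
      exact sum_congr rfl fun j _ => by simp only [Pi.neg_apply]; ring
    rw [hneg, abs_neg, abs_sub_comm, abs_of_nonneg (sub_nonneg.2 (ha h0 hK K.zero_le))]
    convert abs_sum_mul_sub_le_of_monotoneOn ha.neg hb using 2
    simp only [Pi.neg_apply]; ring

noncomputable def uniformPartition (t T : ℝ) (n k : ℕ) : ℝ := t + (T - t) * k / n

section uniformPartition

variable {t T : ℝ} {n m : ℕ}

@[simp]
theorem uniformPartition_zero : uniformPartition t T n 0 = t := by simp [uniformPartition]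

theorem uniformPartition_self (hn : n ≠ 0) : uniformPartition t T n n = T := by
  simp [uniformPartition, hn]

theorem monotone_uniformPartition (htT : t ≤ T) : Monotone (uniformPartition t T n) :=
  fun i j hij => by
    unfold uniformPartition
    gcongr

theorem mapsTo_uniformPartition (htT : t ≤ T) :
    Set.MapsTo (uniformPartition t T n) (Set.Iic n) (Set.Icc t T) := by
  rcases eq_or_ne n 0 with rfl | hn
  · simp [uniformPartition, Set.MapsTo, htT]
  intro k hk
  have hlow := monotone_uniformPartition (n := n) htT k.zero_le
  have hup := monotone_uniformPartition (n := n) htT (Set.mem_Iic.1 hk)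
  rw [uniformPartition_zero] at hlow
  rw [uniformPartition_self hn] at hup
  exact ⟨hlow, hup⟩

theorem uniformPartition_mul_mul (hm : m ≠ 0) (k : ℕ) :
    uniformPartition t T (n * m) (k * m) = uniformPartition t T n k := by
  simp only [uniformPartition, Nat.cast_mul]
  field_simp

theorem RSsum_eq_sum_uniformPartition (g h : ℝ → ℝ) :
    RSsum t T n g h = ∑ k ∈ range n, g (uniformPartition t T n (k + 1)) *
      (h (uniformPartition t T n (k + 1)) - h (uniformPartition t T n k)) := by
  simp [RSsum, uniformPartition]

theorem RSsum_eq_sum_refine (g h : ℝ → ℝ) (hm : m ≠ 0) :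
    RSsum t T n g h = ∑ j ∈ range (n * m), g (uniformPartition t T n (j / m + 1)) *
      (h (uniformPartition t T (n * m) (j + 1)) - h (uniformPartition t T (n * m) j)) := by
  rw [RSsum_eq_sum_uniformPartition, sum_range_mul_eq_sum_sum]
  refine sum_congr rfl fun k _ => ?_
  have hdiv : ∀ i ∈ range m, (k * m + i) / m = k := fun i hi => by
    rw [mul_comm, Nat.mul_add_div (Nat.pos_of_ne_zero hm), Nat.div_eq_of_lt (mem_range.1 hi),
      add_zero]
  rw [sum_congr rfl fun i hi => by rw [hdiv i hi, add_assoc], ← mul_sum]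
  rw [sum_range_sub (fun i => h (uniformPartition t T (n * m) (k * m + i))), add_zero,
    ← Nat.succ_mul, uniformPartition_mul_mul hm, uniformPartition_mul_mul hm]

theorem dist_uniformPartition_div_add_one_le (htT : t ≤ T) (hm : m ≠ 0) (j : ℕ) :
    dist (uniformPartition t T n (j / m + 1)) (uniformPartition t T (n * m) j) ≤ (T - t) / n := by
  rcases eq_or_ne n 0 with rfl | hn
  · simp [uniformPartition]
  have hj : (j : ℝ) = m * (j / m : ℕ) + (j % m : ℕ) := by
    exact_mod_cast (Nat.div_add_mod j m).symm
  have hr : ((j % m : ℕ) : ℝ) < m := by exact_mod_cast Nat.mod_lt j (Nat.pos_of_ne_zero hm)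
  have hdiff : uniformPartition t T n (j / m + 1) - uniformPartition t T (n * m) j
      = (T - t) / n * ((m - (j % m : ℕ)) / m) := by
    simp only [uniformPartition, Nat.cast_mul, Nat.cast_add, Nat.cast_one, hj]
    field_simp
    ring
  have hfrac : 0 ≤ ((m : ℝ) - (j % m : ℕ)) / m ∧ ((m : ℝ) - (j % m : ℕ)) / m ≤ 1 := by
    constructor
    · exact div_nonneg (by linarith) m.cast_nonneg
    · rw [div_le_one (by positivity)]
      linarith [(j % m).cast_nonneg (α := ℝ)]
  have hTt : 0 ≤ (T - t) / n := div_nonneg (by linarith) n.cast_nonneg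
  rw [Real.dist_eq, hdiff, abs_of_nonneg (mul_nonneg hTt hfrac.1)]
  exact mul_le_of_le_one_right hTt hfrac.2

end uniformPartition

theorem mul_le_pow_three_add_pow_three_add_one {a b : ℝ} (ha : 0 ≤ a) (hb : 0 ≤ b) :
    a * b ≤ a ^ 3 + b ^ 3 + 1 := by
  nlinarith [mul_nonneg (sq_nonneg (a - 1)) (by linarith : 0 ≤ a + 1),
    mul_nonneg (sq_nonneg (b - 1)) (by linarith : 0 ≤ b + 1), sq_nonneg (a - b)]

theorem exp_mul_le_exp_abs_mul {c x y : ℝ} (hx : 0 ≤ x) (hxy : x ≤ y) :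
    Real.exp (c * x) ≤ Real.exp (|c| * y) :=
  Real.exp_le_exp.2 <| (mul_le_mul_of_nonneg_right (le_abs_self c) hx).trans <|
    mul_le_mul_of_nonneg_left hxy (abs_nonneg c)

theorem MonotoneOn.monotoneOn_or_antitoneOn_exp_const_mul {f : ℝ → ℝ} {s : Set ℝ}
    (hf : MonotoneOn f s) (c : ℝ) :
    MonotoneOn (fun x => Real.exp (c * f x)) s ∨ AntitoneOn (fun x => Real.exp (c * f x)) s := by
  rcases le_total 0 c with hc | hc
  · exact .inl fun x hx y hy hxy => Real.exp_le_exp.2 (mul_le_mul_of_nonneg_left (hf hx hy hxy) hc)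
  · exact .inr fun x hx y hy hxy => Real.exp_le_exp.2 (mul_le_mul_of_nonpos_left (hf hx hy hxy) hc)

section RSsum

variable {t T : ℝ} {g h : ℝ → ℝ}

theorem monotoneOn_or_antitoneOn_comp_uniformPartition (htT : t ≤ T)
    (hh : MonotoneOn h (Set.Icc t T) ∨ AntitoneOn h (Set.Icc t T)) (n : ℕ) :
    MonotoneOn (h ∘ uniformPartition t T n) (Set.Iic n) ∨
      AntitoneOn (h ∘ uniformPartition t T n) (Set.Iic n) :=
  hh.imp
    (fun hh => hh.comp ((monotone_uniformPartition htT).monotoneOn _) (mapsTo_uniformPartition htT))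
    (fun hh => hh.comp_MonotoneOn ((monotone_uniformPartition htT).monotoneOn _)
      (mapsTo_uniformPartition htT))

theorem abs_RSsum_le (htT : t ≤ T)
    (hh : MonotoneOn h (Set.Icc t T) ∨ AntitoneOn h (Set.Icc t T)) {C : ℝ}
    (hC : ∀ s ∈ Set.Icc t T, |g s| ≤ C) (n : ℕ) :
    |RSsum t T n g h| ≤ C * |h T - h t| := by
  rcases eq_or_ne n 0 with rfl | hn
  · simpa [RSsum] using mul_nonneg ((abs_nonneg _).trans (hC t ⟨le_rfl, htT⟩)) (abs_nonneg _)
  have := abs_sum_mul_sub_le (monotoneOn_or_antitoneOn_comp_uniformPartition htT hh n)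
    (b := fun k => g (uniformPartition t T n (k + 1))) (C := C)
    (fun j hj => hC _ (mapsTo_uniformPartition htT (Set.mem_Iic.2 hj)))
  simpa [RSsum_eq_sum_uniformPartition, uniformPartition_self hn] using this

theorem abs_RSsum_sub_RSsum_le (htT : t ≤ T)
    (hh : MonotoneOn h (Set.Icc t T) ∨ AntitoneOn h (Set.Icc t T)) {ε δ : ℝ}
    (hg : ∀ x ∈ Set.Icc t T, ∀ y ∈ Set.Icc t T, dist x y < δ → dist (g x) (g y) < ε)
    {n m : ℕ} (hn : n ≠ 0) (hm : m ≠ 0) (hmesh : (T - t) / n + (T - t) / m < δ) :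
    |RSsum t T n g h - RSsum t T m g h| ≤ ε * |h T - h t| := by
  rw [RSsum_eq_sum_refine g h hm, RSsum_eq_sum_refine g h hn, Nat.mul_comm m n,
    ← sum_sub_distrib]
  simp only [← sub_mul]
  have hmem : ∀ {j a b : ℕ}, j < a * b → uniformPartition t T a (j / b + 1) ∈ Set.Icc t T :=
    fun hj => mapsTo_uniformPartition htT (Set.mem_Iic.2 (Nat.div_lt_of_lt_mul (by rwa [mul_comm])))
  have := abs_sum_mul_sub_le (monotoneOn_or_antitoneOn_comp_uniformPartition htT hh (n * m))
    (C := ε) (b := fun j => g (uniformPartition t T n (j / m + 1)) -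
      g (uniformPartition t T m (j / n + 1))) fun j hj => by
    rw [← Real.dist_eq]
    refine (hg _ (hmem hj) _ (hmem (by rwa [mul_comm])) ?_).le
    calc _ ≤ dist (uniformPartition t T n (j / m + 1)) (uniformPartition t T (n * m) j) +
          dist (uniformPartition t T m (j / n + 1)) (uniformPartition t T (n * m) j) :=
          dist_triangle_right _ _ _
      _ ≤ (T - t) / n + (T - t) / m := by
          gcongr
          · exact dist_uniformPartition_div_add_one_le htT hm j
          · simpa [mul_comm] using dist_uniformPartition_div_add_one_le (n := m) htT hn j
      _ < δ := hmesh
  simpa [uniformPartition_self (mul_ne_zero hn hm)] using this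

theorem cauchySeq_RSsum (htT : t ≤ T) (hg : ContinuousOn g (Set.Icc t T))
    (hh : MonotoneOn h (Set.Icc t T) ∨ AntitoneOn h (Set.Icc t T)) :
    CauchySeq fun n => RSsum t T n g h := by
  rw [Metric.cauchySeq_iff]
  intro ε hε
  set V := |h T - h t|
  obtain ⟨δ, hδ, hgδ⟩ := Metric.uniformContinuousOn_iff.1
    (isCompact_Icc.uniformContinuousOn_of_continuous hg) (ε / (V + 1)) (by positivity)
  obtain ⟨N, hN⟩ := exists_nat_gt (2 * (T - t) / δ)
  rw [div_lt_iff₀ hδ] at hN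
  have hmesh : ∀ k ≥ N + 1, (T - t) / k < δ / 2 := fun k hk => by
    have hk : (N : ℝ) + 1 ≤ k := by exact_mod_cast hk
    rw [div_lt_iff₀ (by linarith [N.cast_nonneg (α := ℝ)])]
    nlinarith
  refine ⟨N + 1, fun n hn m hm => ?_⟩
  rw [Real.dist_eq]
  calc _ ≤ ε / (V + 1) * V := abs_RSsum_sub_RSsum_le htT hh hgδ (by omega) (by omega)
        (by linarith [hmesh n hn, hmesh m hm])
    _ < ε := by
        rw [div_mul_eq_mul_div, div_lt_iff₀ (by positivity)]
        nlinarith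

theorem abs_RSsum_exp_const_mul_le (htT : t ≤ T) {f : ℝ → ℝ}
    (hf : MonotoneOn f (Set.Icc t T)) (hf0 : ∀ s ∈ Set.Icc t T, 0 ≤ f s) (c : ℝ) {C : ℝ}
    (hC : ∀ s ∈ Set.Icc t T, |g s| ≤ C) (n : ℕ) :
    |RSsum t T n g (fun s => Real.exp (c * f s))| ≤ C ^ 3 + Real.exp (3 * |c| * f T) + 1 := by
  have hT : T ∈ Set.Icc t T := ⟨htT, le_rfl⟩
  have ht : t ∈ Set.Icc t T := ⟨le_rfl, htT⟩
  have hexp : ∀ s ∈ Set.Icc t T, Real.exp (c * f s) ≤ Real.exp (|c| * f T) := fun s hs =>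
    exp_mul_le_exp_abs_mul (hf0 s hs) (hf hs hT hs.2)
  have hC0 : 0 ≤ C := (abs_nonneg _).trans (hC t ht)
  calc _ ≤ C * |Real.exp (c * f T) - Real.exp (c * f t)| :=
        abs_RSsum_le htT (hf.monotoneOn_or_antitoneOn_exp_const_mul c) hC n
    _ ≤ C * Real.exp (|c| * f T) := mul_le_mul_of_nonneg_left
        (abs_sub_le_of_nonneg_of_le (Real.exp_pos _).le (hexp T hT)
          (Real.exp_pos _).le (hexp t ht)) hC0
    _ ≤ C ^ 3 + Real.exp (|c| * f T) ^ 3 + 1 :=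
        mul_le_pow_three_add_pow_three_add_one hC0 (Real.exp_pos _).le
    _ = C ^ 3 + Real.exp (3 * |c| * f T) + 1 := by rw [← Real.exp_nat_mul]; ring_nf

end RSsum

theorem IsCompact.abs_le_iSup_abs {α : Type*} [TopologicalSpace α] {f : α → ℝ} {s : Set α}
    (hs : IsCompact s) (hf : ContinuousOn f s) {x : α} (hx : x ∈ s) :
    |f x| ≤ ⨆ y : s, |f y| :=
  le_ciSup (f := fun y : s => |f y|)
    (by simpa [Set.image_eq_range] using (hs.image_of_continuousOn hf.abs).bddAbove) ⟨x, hx⟩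

theorem integrable_of_abs_le_of_integrable_pow_three {Ω : Type*} [MeasurableSpace Ω]
    {P : Measure Ω} [IsFiniteMeasure P] {f g : Ω → ℝ} (hf : AEStronglyMeasurable f P)
    (hg : Integrable (fun ω => g ω ^ 3) P) (hfg : ∀ ω, |f ω| ≤ g ω) : Integrable f P :=
  (hg.add (integrable_const 1)).mono' hf <| ae_of_all _ fun ω => by
    have hg0 : 0 ≤ g ω := (abs_nonneg _).trans (hfg ω)
    exact (hfg ω).trans (show g ω ≤ g ω ^ 3 + 1 by
      nlinarith [mul_nonneg hg0 (sq_nonneg (g ω - 1))])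

theorem integral_RSsum_of_indepFun {Ω : Type*} [MeasurableSpace Ω] {P : Measure Ω}
    [IsProbabilityMeasure P] {t T : ℝ} {X H : ℝ → Ω → ℝ} (htT : t ≤ T)
    (hind : IndepFun (fun ω (s : Set.Icc t T) => H s ω) (fun ω (s : Set.Icc t T) => X s ω) P)
    (hX : ∀ s ∈ Set.Icc t T, Integrable (X s) P)
    (hH : ∀ s ∈ Set.Icc t T, Integrable (H s) P)
    (n : ℕ) :
    ∫ ω, RSsum t T n (fun s => X s ω) (fun s => H s ω) ∂P =
      RSsum t T n (fun s => ∫ ω, X s ω ∂P) (fun s => ∫ ω, H s ω ∂P) := by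
  have hincr : ∀ {a b c : ℝ} (ha : a ∈ Set.Icc t T) (hb : b ∈ Set.Icc t T)
      (hc : c ∈ Set.Icc t T), IndepFun (X a) (H b - H c) P := fun {a b c} ha hb hc =>
    (hind.comp (φ := fun f : Set.Icc t T → ℝ => f ⟨b, hb⟩ - f ⟨c, hc⟩)
      (ψ := fun f : Set.Icc t T → ℝ => f ⟨a, ha⟩) (by fun_prop)
      (measurable_pi_apply _)).symm
  have hmem : ∀ k ∈ range n, uniformPartition t T n (k + 1) ∈ Set.Icc t T ∧
      uniformPartition t T n k ∈ Set.Icc t T := fun k hk =>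
    ⟨mapsTo_uniformPartition htT (Set.mem_Iic.2 (mem_range.1 hk)),
      mapsTo_uniformPartition htT (Set.mem_Iic.2 (mem_range.1 hk).le)⟩
  simp only [RSsum_eq_sum_uniformPartition]
  rw [integral_finsetSum]
  · refine sum_congr rfl fun k hk => ?_
    obtain ⟨hk1, hk0⟩ := hmem k hk
    rw [← integral_sub (hH _ hk1) (hH _ hk0)]
    exact (hincr hk1 hk1 hk0).integral_mul_eq_mul_integral (hX _ hk1).aestronglyMeasurable
      ((hH _ hk1).sub (hH _ hk0)).aestronglyMeasurable
  · intro k hk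
    obtain ⟨hk1, hk0⟩ := hmem k hk
    exact (hincr hk1 hk1 hk0).integrable_mul (hX _ hk1) ((hH _ hk1).sub (hH _ hk0))

theorem stmt8_general {Ω : Type*} [MeasurableSpace Ω] (P : Measure Ω) [IsProbabilityMeasure P]
    (t T c : ℝ) (htT : t ≤ T)
    (L Y : ℝ → Ω → ℝ)
    (hLmeas : ∀ s, Measurable (L s)) (hYmeas : ∀ s, Measurable (Y s))
    (hLmono : ∀ ω, MonotoneOn (fun s => L s ω) (Set.Icc t T))
    (hL0 : ∀ s ω, 0 ≤ L s ω)
    (hYcont : ∀ ω, ContinuousOn (fun s => Y s ω) (Set.Icc t T))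
    -- the σ-algebras generated by (L_s)_{s∈[t,T]} and (Y_s)_{s∈[t,T]} are independent
    (hInd : IndepFun (fun ω => fun s : Set.Icc t T => L s ω)
      (fun ω => fun s : Set.Icc t T => Y s ω) P)
    (hLint : Integrable (fun ω => Real.exp (3 * |c| * L T ω)) P)
    (hYint : Integrable (fun ω => (⨆ s : Set.Icc t T, |Y s ω|) ^ 3) P) :
    -- E[∫_t^T Y_s d(e^{c L_s})] = ∫_t^T E[Y_s] d(E[e^{c L_s}]), both Stieltjes integrals
    -- realized as limits of Riemann–Stieltjes sums
    ∃ J : Ω → ℝ,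
      (∀ ω, Tendsto
        (fun n => RSsum t T n (fun s => Y s ω) (fun s => Real.exp (c * L s ω)))
        atTop (nhds (J ω))) ∧
      Tendsto
        (fun n => RSsum t T n (fun s => ∫ ω, Y s ω ∂P)
          (fun s => ∫ ω, Real.exp (c * L s ω) ∂P))
        atTop (nhds (∫ ω, J ω ∂P)) := by
  have hYS : ∀ ω, ∀ s ∈ Set.Icc t T, |Y s ω| ≤ ⨆ s : Set.Icc t T, |Y s ω| :=
    fun ω s hs => isCompact_Icc.abs_le_iSup_abs (hYcont ω) hs
  choose J hJ using fun ω => cauchySeq_tendsto_of_complete <|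
    cauchySeq_RSsum htT (hYcont ω) ((hLmono ω).monotoneOn_or_antitoneOn_exp_const_mul c)
  refine ⟨J, hJ, ?_⟩
  have hYsint : ∀ s ∈ Set.Icc t T, Integrable (Y s) P := fun s hs =>
    integrable_of_abs_le_of_integrable_pow_three (hYmeas s).aestronglyMeasurable hYint
      fun ω => hYS ω s hs
  have hexpint : ∀ s ∈ Set.Icc t T, Integrable (fun ω => Real.exp (c * L s ω)) P :=
    fun s hs => hLint.mono' (by fun_prop) <| ae_of_all _ fun ω => by
      rw [Real.norm_of_nonneg (Real.exp_pos _).le]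
      refine (exp_mul_le_exp_abs_mul (hL0 s ω) (hLmono ω hs ⟨htT, le_rfl⟩ hs.2)).trans ?_
      exact Real.exp_le_exp.2 (by nlinarith [abs_nonneg c, hL0 T ω])
  have hind : IndepFun (fun ω (s : Set.Icc t T) => Real.exp (c * L s ω))
      (fun ω (s : Set.Icc t T) => Y s ω) P :=
    hInd.comp (φ := fun f s => Real.exp (c * f s)) (by fun_prop) measurable_id
  simp only [← integral_RSsum_of_indepFun htT hind hYsint hexpint]
  exact tendsto_integral_of_dominated_convergence _ (fun n => by unfold RSsum; fun_prop)
    ((hYint.add hLint).add (integrable_const 1))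
    (fun n => ae_of_all _ fun ω =>
      abs_RSsum_exp_const_mul_le htT (hLmono ω) (fun s _ => hL0 s ω) c (hYS ω) n)
    (ae_of_all _ hJ)

theorem stmt8 {Ω : Type*} [MeasurableSpace Ω] (P : Measure Ω) [IsProbabilityMeasure P]
    (t T c : ℝ) (htT : t ≤ T) (hc : c ≠ 0)
    (L Y : ℝ → Ω → ℝ)
    (hLmeas : ∀ s, Measurable (L s)) (hYmeas : ∀ s, Measurable (Y s))
    (hLcont : ∀ ω, ContinuousOn (fun s => L s ω) (Set.Icc t T))
    (hLmono : ∀ ω, MonotoneOn (fun s => L s ω) (Set.Icc t T))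
    (hLt : ∀ ω, L t ω = 0)
    (hL0 : ∀ s ω, 0 ≤ L s ω)
    (hYcont : ∀ ω, ContinuousOn (fun s => Y s ω) (Set.Icc t T))
    -- the σ-algebras generated by (L_s)_{s∈[t,T]} and (Y_s)_{s∈[t,T]} are independent
    (hInd : IndepFun (fun ω => fun s : Set.Icc t T => L s ω)
      (fun ω => fun s : Set.Icc t T => Y s ω) P)
    (hLint : Integrable (fun ω => Real.exp (3 * |c| * L T ω)) P)
    (hYint : Integrable (fun ω => (⨆ s : Set.Icc t T, |Y s ω|) ^ 3) P) :
    -- E[∫_t^T Y_s d(e^{c L_s})] = ∫_t^T E[Y_s] d(E[e^{c L_s}]), both Stieltjes integrals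
    -- realized as limits of Riemann–Stieltjes sums
    ∃ J : Ω → ℝ,
      (∀ ω, Tendsto
        (fun n => RSsum t T n (fun s => Y s ω) (fun s => Real.exp (c * L s ω)))
        atTop (nhds (J ω))) ∧
      Tendsto
        (fun n => RSsum t T n (fun s => ∫ ω, Y s ω ∂P)
          (fun s => ∫ ω, Real.exp (c * L s ω) ∂P))
        atTop (nhds (∫ ω, J ω ∂P)) :=
  stmt8_general P t T c htT L Y hLmeas hYmeas hLmono hL0 hYcont hInd hLint hYint
end
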